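/- arXiv:2506.10804 — 3 statements merged into one kernel-verified Lean document; each statement's English description precedes it below -/
import Mathlib

section
/- Let I = (t₀, t_f) be a bounded open interval, x₀ ∈ ℝ^{n_x}, and let f̃ : I × ℝ^{n_x} → ℝ^{n_x} be measurable in t ∈ I for each x ∈ ℝ^{n_x}, continuous in x ∈ ℝ^{n_x} for almost all t ∈ I, and suppose there exists an integrable function m : I → ℝ such that ‖f̃(t, x)‖ ≤ m(t) for almost all t ∈ I and all x ∈ ℝ^{n_x}. Then the initial value problem x'(t) = f̃(t, x(t)) for a.a. t ∈ I, x(t₀) = x₀ has a solution x ∈ W^{1,1}(I)^{n_x}; that is, there exists an absolutely continuous function x : [t₀, t_f] → ℝ^{n_x} with x(t) = x₀ + ∫_{t₀}^{t} f̃(s, x(s)) ds for all t ∈ [t₀, t_f], where s ↦ f̃(s, x(s)) is integrable. -/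
/-!
Tonelli's delayed approximations `u_δ t = x₀ + ∫ s in t₀..max t₀ (t - δ), f s (u_δ s)` exist for
every `δ > 0`, since the right-hand side only looks `δ` into the past and so can be computed by
forward recursion in steps of length `δ`. With `P t = ∫ s in t₀..t, m s`, every `u_δ` satisfies
`dist (u_δ a) (u_δ b) ≤ dist (P (a - δ)) (P (b - δ))` (arguments clamped at `t₀`), so the family is
uniformly bounded and equicontinuous on `[t₀, T]`, and Arzelà–Ascoli gives a sequence `δ_k → 0`
along which `u_{δ_k}` converges pointwise to a continuous `x`. Dominated convergence with bound `m`,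
together with `‖∫ s in t - δ..t, f s (u_δ s)‖ ≤ |P t - P (t - δ)| → 0`, shows that `x` solves the
integral equation. Extending `f` and `m` by zero off `[t₀, t_f]` makes all hypotheses global.
-/

open MeasureTheory Set Filter Topology

theorem aestronglyMeasurable_comp_of_ae_continuous {α β γ : Type*} [MeasurableSpace α]
    {μ : Measure α} [TopologicalSpace β] [TopologicalSpace γ]
    [TopologicalSpace.PseudoMetrizableSpace γ] [SecondCountableTopology γ] [MeasurableSpace γ]
    [BorelSpace γ] {f : α → β → γ} (hmeas : ∀ x, Measurable fun t => f t x)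
    (hcont : ∀ᵐ t ∂μ, Continuous (f t)) {u : α → β} (hu : StronglyMeasurable u) :
    AEStronglyMeasurable (fun t => f t (u t)) μ := by
  refine (aemeasurable_of_tendsto_metrizable_ae atTop (fun n =>
    ((hu.approx n).measurable_bind (fun x t => f t x) hmeas).aemeasurable) ?_).aestronglyMeasurable
  filter_upwards [hcont] with t ht
  exact (ht.tendsto (u t)).comp (hu.tendsto_approx t)

variable {E : Type*} [NormedAddCommGroup E] {f : ℝ → E → E} {m : ℝ → ℝ}

structure IsCaratheodory [MeasurableSpace E] (f : ℝ → E → E) (m : ℝ → ℝ) : Prop where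
  measurable : ∀ x, Measurable fun t => f t x
  ae_continuous : ∀ᵐ t, Continuous (f t)
  integrable : Integrable m
  ae_norm_le : ∀ᵐ t, ∀ x, ‖f t x‖ ≤ m t

theorem isCaratheodory_indicator [MeasurableSpace E] {s : Set ℝ} (hs : MeasurableSet s)
    (hmeas : ∀ x, Measurable fun t => f t x) (hcont : ∀ᵐ t ∂volume.restrict s, Continuous (f t))
    (hm : IntegrableOn m s) (hbound : ∀ᵐ t ∂volume.restrict s, ∀ x, ‖f t x‖ ≤ m t) :
    IsCaratheodory (fun t x => s.indicator (fun t => f t x) t) (s.indicator m) where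
  measurable x := (hmeas x).indicator hs
  ae_continuous := by
    filter_upwards [(ae_restrict_iff' hs).1 hcont] with t ht
    by_cases hts : t ∈ s
    · simpa only [indicator_of_mem hts] using ht hts
    · simpa only [indicator_of_notMem hts] using continuous_const
  integrable := hm.integrable_indicator hs
  ae_norm_le := by
    filter_upwards [(ae_restrict_iff' hs).1 hbound] with t ht x
    by_cases hts : t ∈ s
    · simpa only [indicator_of_mem hts] using ht hts x
    · simp only [indicator_of_notMem hts, norm_zero, le_refl]

theorem IsCaratheodory.integrable_comp [MeasurableSpace E] [BorelSpace E]
    [SecondCountableTopology E] (hf : IsCaratheodory f m) {u : ℝ → E}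
    (hu : StronglyMeasurable u) : Integrable fun s => f s (u s) :=
  hf.integrable.mono'
    (aestronglyMeasurable_comp_of_ae_continuous hf.measurable hf.ae_continuous hu)
    (hf.ae_norm_le.mono fun s hs => hs (u s))

theorem IsCaratheodory.norm_integral_comp_le [NormedSpace ℝ E] [MeasurableSpace E]
    (hf : IsCaratheodory f m) (u : ℝ → E) (a b : ℝ) :
    ‖∫ s in a..b, f s (u s)‖ ≤ |∫ s in a..b, m s| :=
  intervalIntegral.norm_integral_le_abs_of_norm_le
    (ae_restrict_of_ae (hf.ae_norm_le.mono fun s hs => hs (u s))) hf.integrable.intervalIntegrable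

noncomputable def tonelliIter [NormedSpace ℝ E] (f : ℝ → E → E) (t0 : ℝ) (x0 : E) (δ : ℝ) :
    ℕ → ℝ → E
  | 0 => fun _ => x0
  | j + 1 => fun t => x0 + ∫ s in t0..max t0 (t - δ), f s (tonelliIter f t0 x0 δ j s)

theorem tonelliIter_succ_eq_of_le [NormedSpace ℝ E] {t0 δ : ℝ} (x0 : E) (hδ : 0 ≤ δ) (j : ℕ) {t : ℝ}
    (ht : t ≤ t0 + j * δ) : tonelliIter f t0 x0 δ (j + 1) t = tonelliIter f t0 x0 δ j t := by
  induction j generalizing t with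
  | zero =>
    have : max t0 (t - δ) = t0 := max_eq_left (by push_cast at ht; linarith)
    simp [tonelliIter, this]
  | succ j ih =>
    show x0 + ∫ s in t0..max t0 (t - δ), f s (tonelliIter f t0 x0 δ (j + 1) s)
      = x0 + ∫ s in t0..max t0 (t - δ), f s (tonelliIter f t0 x0 δ j s)
    refine congrArg (x0 + ·) (intervalIntegral.integral_congr fun s hs => ?_)
    have hs' : s ≤ max t0 (t - δ) := by
      rw [uIcc_of_le (le_max_left _ _)] at hs
      exact hs.2
    have hj : 0 ≤ (j : ℝ) * δ := by positivity
    rw [ih (hs'.trans (max_le (by linarith) (by push_cast at ht; linarith)))]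

theorem IsCaratheodory.continuous_tonelliIter [NormedSpace ℝ E] [MeasurableSpace E]
    [BorelSpace E] [SecondCountableTopology E] (hf : IsCaratheodory f m) (t0 : ℝ) (x0 : E)
    (δ : ℝ) (j : ℕ) : Continuous (tonelliIter f t0 x0 δ j) := by
  induction j with
  | zero => exact continuous_const
  | succ j ih =>
    exact continuous_const.add <| ((hf.integrable_comp ih.stronglyMeasurable).continuous_primitive
      t0).comp (continuous_const.max (continuous_id.sub continuous_const))

structure IsDelayedSolution [NormedSpace ℝ E] (f : ℝ → E → E) (t0 T : ℝ) (x0 : E) (δ : ℝ)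
    (u : ℝ → E) : Prop where
  continuous : Continuous u
  eq : ∀ t ≤ T, u t = x0 + ∫ s in t0..max t0 (t - δ), f s (u s)

theorem IsCaratheodory.exists_isDelayedSolution [NormedSpace ℝ E] [MeasurableSpace E]
    [BorelSpace E] [SecondCountableTopology E] (hf : IsCaratheodory f m) (t0 T : ℝ) (x0 : E)
    {δ : ℝ} (hδ : 0 < δ) : ∃ u, IsDelayedSolution f t0 T x0 δ u := by
  set N := ⌈(T - t0) / δ⌉₊
  have hN : T ≤ t0 + N * δ := by
    have := Nat.le_ceil ((T - t0) / δ)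
    rw [div_le_iff₀ hδ] at this
    linarith
  exact ⟨tonelliIter f t0 x0 δ N, hf.continuous_tonelliIter t0 x0 δ N,
    fun t ht => (tonelliIter_succ_eq_of_le x0 hδ.le N (ht.trans hN)).symm⟩

theorem max_sub_mem_Icc {t0 T δ t : ℝ} (hδ : 0 ≤ δ) (ht : t ∈ Icc t0 T) :
    max t0 (t - δ) ∈ Icc t0 T :=
  ⟨le_max_left _ _, max_le (ht.1.trans ht.2) (by linarith [ht.2])⟩

theorem dist_max_sub_le (t0 δ a b : ℝ) : dist (max t0 (a - δ)) (max t0 (b - δ)) ≤ dist a b := by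
  rw [← dist_sub_right a b δ, Real.dist_eq, Real.dist_eq, max_comm t0, max_comm t0]
  exact abs_max_sub_max_le_abs _ _ _

section DelayedSolution

variable [NormedSpace ℝ E] [MeasurableSpace E] {t0 T δ : ℝ} {x0 : E} {u : ℝ → E}

theorem IsDelayedSolution.dist_initial_le (hf : IsCaratheodory f m)
    (hu : IsDelayedSolution f t0 T x0 δ u) {t : ℝ} (ht : t ≤ T) :
    dist (u t) x0 ≤ |∫ s in t0..max t0 (t - δ), m s| := by
  rw [dist_eq_norm, hu.eq t ht, add_sub_cancel_left]
  exact hf.norm_integral_comp_le u _ _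

theorem IsDelayedSolution.dist_le [BorelSpace E] [SecondCountableTopology E]
    (hf : IsCaratheodory f m) (hu : IsDelayedSolution f t0 T x0 δ u) {a b : ℝ} (ha : a ≤ T)
    (hb : b ≤ T) : dist (u a) (u b)
      ≤ dist (∫ s in t0..max t0 (a - δ), m s) (∫ s in t0..max t0 (b - δ), m s) := by
  have hint := hf.integrable_comp hu.continuous.stronglyMeasurable
  rw [dist_eq_norm, dist_eq_norm, hu.eq a ha, hu.eq b hb, add_sub_add_left_eq_sub,
    intervalIntegral.integral_interval_sub_left hint.intervalIntegrable hint.intervalIntegrable,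
    intervalIntegral.integral_interval_sub_left hf.integrable.intervalIntegrable
      hf.integrable.intervalIntegrable, Real.norm_eq_abs]
  exact hf.norm_integral_comp_le u _ _

theorem IsCaratheodory.uniformEquicontinuousOn_of_isDelayedSolution [BorelSpace E]
    [SecondCountableTopology E] {ι : Type*} (hf : IsCaratheodory f m) {δ : ι → ℝ}
    (hδ : ∀ i, 0 ≤ δ i) {u : ι → ℝ → E} (hu : ∀ i, IsDelayedSolution f t0 T x0 (δ i) (u i)) :
    UniformEquicontinuousOn u (Icc t0 T) := by
  rw [← uniformEquicontinuous_restrict_iff, Metric.uniformEquicontinuous_iff]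
  intro ε hε
  obtain ⟨η, hη, hP⟩ := Metric.uniformContinuousOn_iff.1
    (isCompact_Icc.uniformContinuousOn_of_continuous
      (hf.integrable.continuous_primitive t0).continuousOn) ε hε
  refine ⟨η, hη, fun a b hab i => ((hu i).dist_le hf a.2.2 b.2.2).trans_lt ?_⟩
  exact hP _ (max_sub_mem_Icc (hδ i) a.2) _ (max_sub_mem_Icc (hδ i) b.2)
    ((dist_max_sub_le t0 (δ i) a b).trans_lt hab)

theorem IsCaratheodory.eq_add_integral_of_tendsto [BorelSpace E] [SecondCountableTopology E]
    (hf : IsCaratheodory f m) {δ : ℕ → ℝ} (hδ : Tendsto δ atTop (𝓝 0)) {u : ℕ → ℝ → E}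
    (hu : ∀ k, IsDelayedSolution f t0 T x0 (δ k) (u k)) {x : ℝ → E}
    (hlim : ∀ t ∈ Icc t0 T, Tendsto (fun k => u k t) atTop (𝓝 (x t))) {t : ℝ}
    (ht : t ∈ Icc t0 T) : x t = x0 + ∫ s in t0..t, f s (x s) := by
  set c := fun k => max t0 (t - δ k)
  have hc : Tendsto c atTop (𝓝 t) := by
    have := (tendsto_const_nhds (x := t0)).max ((tendsto_const_nhds (x := t)).sub hδ)
    rwa [sub_zero, max_eq_right ht.1] at this
  have hint k := hf.integrable_comp (hu k).continuous.stronglyMeasurable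
  have hsplit k : u k t = x0 + ((∫ s in t0..t, f s (u k s)) + ∫ s in t..c k, f s (u k s)) := by
    rw [intervalIntegral.integral_add_adjacent_intervals (hint k).intervalIntegrable
      (hint k).intervalIntegrable]
    exact (hu k).eq t ht.2
  have hmain : Tendsto (fun k => ∫ s in t0..t, f s (u k s)) atTop
      (𝓝 (∫ s in t0..t, f s (x s))) := by
    refine intervalIntegral.tendsto_integral_filter_of_dominated_convergence m
      (.of_forall fun k => (hint k).aestronglyMeasurable.restrict)
      (.of_forall fun k => hf.ae_norm_le.mono fun s hs _ => hs _)
      hf.integrable.intervalIntegrable ?_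
    filter_upwards [hf.ae_continuous] with s hs hsI
    rw [uIoc_of_le ht.1] at hsI
    exact (hs.tendsto _).comp (hlim s ⟨hsI.1.le, hsI.2.trans ht.2⟩)
  have herr : Tendsto (fun k => ∫ s in t..c k, f s (u k s)) atTop (𝓝 0) := by
    refine squeeze_zero_norm (fun k => hf.norm_integral_comp_le (u k) t (c k)) ?_
    simpa using (((hf.integrable.continuous_primitive t).tendsto t).comp hc).abs
  have hlim' := (tendsto_const_nhds (x := x0)).add (hmain.add herr)
  rw [add_zero] at hlim'
  exact tendsto_nhds_unique (hlim t ht) (hlim'.congr fun k => (hsplit k).symm)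

end DelayedSolution

open BoundedContinuousFunction in
theorem exists_subseq_tendsto_of_equicontinuousOn_Icc {Y : Type*} [MetricSpace Y] {a b : ℝ}
    (hab : a ≤ b) {K : Set Y} (hK : IsCompact K) {u : ℕ → ℝ → Y}
    (hmem : ∀ k, ∀ t ∈ Icc a b, u k t ∈ K) (hu : EquicontinuousOn u (Icc a b)) :
    ∃ x : ℝ → Y, Continuous x ∧ ∃ φ : ℕ → ℕ, StrictMono φ ∧
      ∀ t ∈ Icc a b, Tendsto (fun j => u (φ j) t) atTop (𝓝 (x t)) := by
  rw [← equicontinuous_restrict_iff] at hu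
  let F : ℕ → Icc a b →ᵇ Y := fun k => .mkOfCompact ⟨(Icc a b).domRestrict (u k), hu.continuous k⟩
  have hF : Equicontinuous ((↑) : range F → Icc a b → Y) := by
    have : ((↑) : range F → Icc a b → Y) = ((Icc a b).domRestrict ∘ u) ∘ rangeSplitting F :=
      funext fun g => by rw [Function.comp_apply, ← apply_rangeSplitting F g]; rfl
    exact this ▸ hu.comp _
  obtain ⟨y, -, φ, hφ, hy⟩ := (BoundedContinuousFunction.arzela_ascoli K hK (range F)
    (by rintro _ t ⟨k, rfl⟩; exact hmem k t t.2) hF).tendsto_subseq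
    fun k => subset_closure (mem_range_self k)
  refine ⟨IccExtend hab y, continuous_IccExtend_iff.2 y.continuous, φ, hφ, fun t ht => ?_⟩
  rw [IccExtend_of_mem hab y ht]
  exact ((continuous_eval_const (⟨t, ht⟩ : Icc a b)).tendsto y).comp hy

theorem IsCaratheodory.exists_continuous_eq_add_integral [NormedSpace ℝ E] [ProperSpace E]
    [MeasurableSpace E] [BorelSpace E] (hf : IsCaratheodory f m) {t0 T : ℝ} (h : t0 ≤ T)
    (x0 : E) : ∃ x : ℝ → E, Continuous x ∧ ∀ t ∈ Icc t0 T, x t = x0 + ∫ s in t0..t, f s (x s) := by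
  have hδ (k : ℕ) : 0 < 1 / ((k : ℝ) + 1) := Nat.one_div_pos_of_nat
  choose u hu using fun k => hf.exists_isDelayedSolution t0 T x0 (hδ k)
  obtain ⟨C, hC⟩ := isCompact_Icc.exists_bound_of_continuousOn (s := Icc t0 T)
    (hf.integrable.continuous_primitive t0).continuousOn
  have hmem k t (ht : t ∈ Icc t0 T) : u k t ∈ Metric.closedBall x0 C :=
    ((hu k).dist_initial_le hf ht.2).trans (hC _ (max_sub_mem_Icc (hδ k).le ht))
  obtain ⟨x, hx, φ, hφ, hlim⟩ := exists_subseq_tendsto_of_equicontinuousOn_Icc h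
    (isCompact_closedBall x0 C) hmem
    (hf.uniformEquicontinuousOn_of_isDelayedSolution (fun k => (hδ k).le) hu).equicontinuousOn
  exact ⟨x, hx, fun t ht => hf.eq_add_integral_of_tendsto
    (tendsto_one_div_add_atTop_nhds_zero_nat.comp hφ.tendsto_atTop) (fun j => hu (φ j))
    hlim ht⟩

/-- Carathéodory existence, Theorem 2.3, first part.
Let `I = (t₀, t_f)` be a bounded open interval, `x₀ ∈ ℝ^{n_x}`, and let
`f̃ : I × ℝ^{n_x} → ℝ^{n_x}` be measurable in `t` for each `x`, continuous in `x` for a.a. `t ∈ I`,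
and bounded by an integrable function `m`.  Then the IVP `x' = f̃(t, x)`, `x(t₀) = x₀` has a
solution in `W^{1,1}(I)^{n_x}`, i.e. there is a continuous `x` on `[t₀, t_f]` with
`x(t) = x₀ + ∫_{t₀}^t f̃(s, x(s)) ds` for all `t ∈ [t₀, t_f]`, the integrand being integrable. -/
theorem ivp_caratheodory_existence
    {nx : ℕ} (t0 tf : ℝ) (ht : t0 < tf) (x0 : Fin nx → ℝ)
    (f : ℝ → (Fin nx → ℝ) → (Fin nx → ℝ))
    (m : ℝ → ℝ)
    (hfmeas : ∀ x : Fin nx → ℝ, Measurable fun t => f t x)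
    (hfcont : ∀ᵐ t ∂(volume.restrict (Set.Ioo t0 tf)), Continuous fun x => f t x)
    (hm_int : IntegrableOn m (Set.Ioo t0 tf))
    (hbound : ∀ᵐ t ∂(volume.restrict (Set.Ioo t0 tf)), ∀ x : Fin nx → ℝ, ‖f t x‖ ≤ m t) :
    ∃ x : ℝ → (Fin nx → ℝ),
      ContinuousOn x (Set.Icc t0 tf) ∧
      IntegrableOn (fun s => f s (x s)) (Set.Ioo t0 tf) ∧
      ∀ t ∈ Set.Icc t0 tf, x t = x0 + ∫ s in t0..t, f s (x s) := by
  rw [restrict_Ioo_eq_restrict_Icc] at hfcont hbound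
  rw [← integrableOn_Icc_iff_integrableOn_Ioo] at hm_int
  have hg := isCaratheodory_indicator measurableSet_Icc hfmeas hfcont hm_int hbound
  obtain ⟨x, hx, hsol⟩ := hg.exists_continuous_eq_add_integral ht.le x0
  have hgf : EqOn (fun s => (Icc t0 tf).indicator (fun t => f t (x s)) s) (fun s => f s (x s))
      (Icc t0 tf) := fun s hs => indicator_of_mem hs _
  refine ⟨x, hx.continuousOn, ?_, fun t htI => ?_⟩
  · exact ((hg.integrable_comp hx.stronglyMeasurable).integrableOn.congr_fun hgf
      measurableSet_Icc).mono_set Ioo_subset_Icc_self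
  · rw [hsol t htI,
      intervalIntegral.integral_congr (hgf.mono (uIcc_subset_Icc ⟨le_rfl, ht.le⟩ htI))]
end

section
/- Let I = (t₀, t_f) be a bounded open interval. Then the evaluation (Nemytskii) operator Φ : L^∞(I)^{n_y} × (G²(I))^{m} → L^∞(I)^{m} defined by Φ(y, h) := h(·, y(·)) is continuously Fréchet differentiable, with derivative [Φ'(y, h)(δy, δh)](t) = h_y(t, y(t)) δy(t) + δh(t, y(t)), where h_y denotes the partial Jacobian of h with respect to its second argument. -/
open MeasureTheory Set
open scoped NNReal ENNReal

noncomputable section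

/-- The restriction of Lebesgue measure to the interval `I = (t₀, t_f)`. -/
def μI (t0 tf : ℝ) : Measure ℝ := volume.restrict (Set.Ioo t0 tf)

/-- `L^∞(I)^n` (extended) norm: essential supremum of `‖x(t)‖` over `I`. -/
def eLinf {n : ℕ} (t0 tf : ℝ) (x : ℝ → (Fin n → ℝ)) : ℝ≥0∞ :=
  essSup (fun t => (‖x t‖₊ : ℝ≥0∞)) (μI t0 tf)

/-- Membership in `L^∞(I)^n`: a.e.-measurable and essentially bounded. -/
def MemLinf {n : ℕ} (t0 tf : ℝ) (x : ℝ → (Fin n → ℝ)) : Prop :=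
  AEStronglyMeasurable x (μI t0 tf) ∧ eLinf t0 tf x < ⊤

/-- The (extended) `G^s(I)`-norm of `h : I × ℝ^{n_y} → ℝ^m`. -/
def gNormE {ny m : ℕ} (t0 tf : ℝ) (s : ℕ)
    (h : ℝ → (Fin ny → ℝ) → (Fin m → ℝ)) : ℝ≥0∞ :=
  ∑ k ∈ Finset.range (s + 1),
    essSup (fun t => ⨆ y : Fin ny → ℝ, (‖iteratedFDeriv ℝ k (h t) y‖₊ : ℝ≥0∞)) (μI t0 tf)

/-- Membership in the Banach space `(G^s(I))^m`. -/
def MemG {ny m : ℕ} (t0 tf : ℝ) (s : ℕ) (h : ℝ → (Fin ny → ℝ) → (Fin m → ℝ)) : Prop :=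
  (∀ y, Measurable fun t => h t y) ∧
  (∀ᵐ t ∂(μI t0 tf), ContDiff ℝ (s : ℕ∞) (h t)) ∧
  gNormE t0 tf s h < ⊤

/-- The evaluation (Nemytskii) operator `Φ(y, h) := h(·, y(·))`. -/
def evalOp {ny m : ℕ} (y : ℝ → (Fin ny → ℝ))
    (h : ℝ → (Fin ny → ℝ) → (Fin m → ℝ)) : ℝ → (Fin m → ℝ) :=
  fun t => h t (y t)

/-- Its claimed Fréchet derivative at `(y, h)` in direction `(δy, δh)`:
`[Φ'(y,h)(δy,δh)](t) = h_y(t, y(t)) δy(t) + δh(t, y(t))`. -/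
def evalOpDeriv {ny m : ℕ} (y : ℝ → (Fin ny → ℝ))
    (h δh : ℝ → (Fin ny → ℝ) → (Fin m → ℝ)) (δy : ℝ → (Fin ny → ℝ)) : ℝ → (Fin m → ℝ) :=
  fun t => (fderiv ℝ (h t) (y t)) (δy t) + δh t (y t)

/-! Fix `t`. By the second-order Taylor estimate and the mean value inequality,
`‖h(y + δy) + δh(y + δy) - h(y) - h_y(y) δy - δh(y)‖ ≤ ‖h_yy‖ ‖δy‖² + ‖δh_y‖ ‖δy‖`, and likewise
`‖(h'_y(y') - h_y(y)) δy + δh(y') - δh(y)‖ ≤ (‖(h' - h)_y‖ + ‖h_yy‖ ‖y' - y‖) ‖δy‖ + ‖δh_y‖ ‖y' - y‖`,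
where the derivative norms are suprema over the second argument. These are bounded by the
`G²`-norms for almost every `t`, so taking essential suprema bounds both the remainder and the
variation of the derivative by `(‖h‖_{G²} + 2) · ‖(Δy, Δh)‖ · ‖(δy, δh)‖`, with `(Δy, Δh)` the
displacement of the base point (`(δy, δh)` itself for the remainder); this is at most
`ε ‖(δy, δh)‖` once `‖(Δy, Δh)‖ ≤ ε / (‖h‖_{G²} + 2)`. -/

section Calculus

variable {E F : Type*} [NormedAddCommGroup E] [NormedSpace ℝ E]
  [NormedAddCommGroup F] [NormedSpace ℝ F]

theorem enorm_fderiv_eq_enorm_iteratedFDeriv_one (f : E → F) (x : E) :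
    ‖fderiv ℝ f x‖ₑ = ‖iteratedFDeriv ℝ 1 f x‖ₑ := by
  rw [← ofReal_norm, ← ofReal_norm, norm_iteratedFDeriv_one]

theorem enorm_fderiv_fderiv_eq_enorm_iteratedFDeriv_two (f : E → F) (x : E) :
    ‖fderiv ℝ (fderiv ℝ f) x‖ₑ = ‖iteratedFDeriv ℝ 2 f x‖ₑ := by
  rw [enorm_fderiv_eq_enorm_iteratedFDeriv_one, ← ofReal_norm, ← ofReal_norm,
    norm_iteratedFDeriv_fderiv]

theorem enorm_sub_le_of_enorm_fderiv_le {f : E → F} (hf : Differentiable ℝ f) {C : ℝ≥0∞}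
    (hC : ∀ x, ‖fderiv ℝ f x‖ₑ ≤ C) (a b : E) : ‖f a - f b‖ₑ ≤ C * ‖a - b‖ₑ := by
  induction C using ENNReal.recTopCoe with
  | top =>
    rcases eq_or_ne a b with rfl | hab
    · simp
    · simp [sub_ne_zero.mpr hab]
  | coe C =>
    rw [← edist_eq_enorm_sub, ← edist_eq_enorm_sub]
    exact (lipschitzWith_of_nnnorm_fderiv_le hf fun x => enorm_le_coe.mp (hC x)).edist_le_mul a b

/-- Mean value inequality for `f - f'(a)` on the ball of radius `‖v‖` about `a`, on which
`‖f'(x) - f'(a)‖ ≤ C ‖v‖`. -/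
theorem enorm_taylor_remainder_le {f : E → F} (hf : Differentiable ℝ f)
    (hf' : Differentiable ℝ (fderiv ℝ f)) {C : ℝ≥0∞}
    (hC : ∀ x, ‖fderiv ℝ (fderiv ℝ f) x‖ₑ ≤ C) (a v : E) :
    ‖f (a + v) - f a - fderiv ℝ f a v‖ₑ ≤ C * ‖v‖ₑ * ‖v‖ₑ := by
  induction C using ENNReal.recTopCoe with
  | top =>
    rcases eq_or_ne v 0 with rfl | hv
    · simp
    · simp [hv]
  | coe C =>
    have hball : ∀ x ∈ Metric.closedBall a ‖v‖,
        ‖fderiv ℝ f x - fderiv ℝ f a‖ ≤ C * ‖v‖ := fun x hx => by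
      rw [← dist_eq_norm]
      have hL := lipschitzWith_of_nnnorm_fderiv_le hf' fun x => enorm_le_coe.mp (hC x)
      exact (hL.dist_le_mul x a).trans (by gcongr; exact hx)
    have hmv := (convex_closedBall a ‖v‖).norm_image_sub_le_of_norm_fderiv_le'
      (fun x _ => hf x) hball (Metric.mem_closedBall_self (norm_nonneg v))
      (y := a + v) (by simp [dist_eq_norm])
    rw [add_sub_cancel_left] at hmv
    rw [enorm_eq_nnnorm, enorm_eq_nnnorm]
    exact_mod_cast hmv

end Calculus

def gSeminormE {ny m : ℕ} (t0 tf : ℝ) (k : ℕ) (h : ℝ → (Fin ny → ℝ) → (Fin m → ℝ)) : ℝ≥0∞ :=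
  essSup (fun t => ⨆ y : Fin ny → ℝ, (‖iteratedFDeriv ℝ k (h t) y‖₊ : ℝ≥0∞)) (μI t0 tf)

section Nemytskii

variable {ny m : ℕ} {t0 tf : ℝ}

theorem gSeminormE_le_gNormE {k s : ℕ} (hk : k ≤ s) (h : ℝ → (Fin ny → ℝ) → (Fin m → ℝ)) :
    gSeminormE t0 tf k h ≤ gNormE t0 tf s h :=
  Finset.single_le_sum (f := fun k => gSeminormE t0 tf k h) (fun _ _ => zero_le)
    (Finset.mem_range_succ_iff.mpr hk)

theorem ae_enorm_iteratedFDeriv_le_gSeminormE (k : ℕ) (h : ℝ → (Fin ny → ℝ) → (Fin m → ℝ)) :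
    ∀ᵐ t ∂μI t0 tf, ∀ x, ‖iteratedFDeriv ℝ k (h t) x‖ₑ ≤ gSeminormE t0 tf k h := by
  filter_upwards [ENNReal.ae_le_essSup fun t =>
    ⨆ y : Fin ny → ℝ, (‖iteratedFDeriv ℝ k (h t) y‖₊ : ℝ≥0∞)] with t ht x
  exact (le_iSup (fun y => (‖iteratedFDeriv ℝ k (h t) y‖₊ : ℝ≥0∞)) x).trans ht

theorem ae_enorm_fderiv_le_gSeminormE_one (h : ℝ → (Fin ny → ℝ) → (Fin m → ℝ)) :
    ∀ᵐ t ∂μI t0 tf, ∀ x, ‖fderiv ℝ (h t) x‖ₑ ≤ gSeminormE t0 tf 1 h := by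
  filter_upwards [ae_enorm_iteratedFDeriv_le_gSeminormE 1 h] with t ht x
  rw [enorm_fderiv_eq_enorm_iteratedFDeriv_one]
  exact ht x

theorem ae_enorm_fderiv_fderiv_le_gSeminormE_two (h : ℝ → (Fin ny → ℝ) → (Fin m → ℝ)) :
    ∀ᵐ t ∂μI t0 tf, ∀ x, ‖fderiv ℝ (fderiv ℝ (h t)) x‖ₑ ≤ gSeminormE t0 tf 2 h := by
  filter_upwards [ae_enorm_iteratedFDeriv_le_gSeminormE 2 h] with t ht x
  rw [enorm_fderiv_fderiv_eq_enorm_iteratedFDeriv_two]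
  exact ht x

theorem ae_enorm_le_eLinf {n : ℕ} (x : ℝ → (Fin n → ℝ)) :
    ∀ᵐ t ∂μI t0 tf, ‖x t‖ₑ ≤ eLinf t0 tf x :=
  ENNReal.ae_le_essSup _

theorem MemG.ae_contDiff {s : ℕ} {h : ℝ → (Fin ny → ℝ) → (Fin m → ℝ)} (hh : MemG t0 tf s h) :
    ∀ᵐ t ∂μI t0 tf, ContDiff ℝ s (h t) := by
  filter_upwards [hh.2.1] with t ht
  exact_mod_cast ht

theorem MemG.gSeminormE_ne_top {s k : ℕ} {h : ℝ → (Fin ny → ℝ) → (Fin m → ℝ)}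
    (hh : MemG t0 tf s h) (hk : k ≤ s) : gSeminormE t0 tf k h ≠ ⊤ :=
  ((gSeminormE_le_gNormE hk h).trans_lt hh.2.2).ne

theorem MemG.ae_differentiable {s : ℕ} {h : ℝ → (Fin ny → ℝ) → (Fin m → ℝ)}
    (hh : MemG t0 tf s h) (hs : s ≠ 0) : ∀ᵐ t ∂μI t0 tf, Differentiable ℝ (h t) := by
  filter_upwards [hh.ae_contDiff] with t ht
  exact ht.differentiable (by exact_mod_cast hs)

variable {y δy : ℝ → (Fin ny → ℝ)} {h δh : ℝ → (Fin ny → ℝ) → (Fin m → ℝ)}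

theorem eLinf_evalOp_remainder_le (hh : ∀ᵐ t ∂μI t0 tf, ContDiff ℝ 2 (h t))
    (hδh : ∀ᵐ t ∂μI t0 tf, Differentiable ℝ (δh t)) :
    eLinf t0 tf (fun t => evalOp (y + δy) (h + δh) t - evalOp y h t - evalOpDeriv y h δh δy t)
      ≤ gSeminormE t0 tf 2 h * eLinf t0 tf δy * eLinf t0 tf δy
        + gSeminormE t0 tf 1 δh * eLinf t0 tf δy := by
  refine essSup_le_of_ae_le _ ?_
  filter_upwards [hh, hδh, ae_enorm_fderiv_fderiv_le_gSeminormE_two h,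
    ae_enorm_fderiv_le_gSeminormE_one δh, ae_enorm_le_eLinf δy]
    with t hht hδht hC hD hδyt
  have hsplit : evalOp (y + δy) (h + δh) t - evalOp y h t - evalOpDeriv y h δh δy t
      = (h t (y t + δy t) - h t (y t) - fderiv ℝ (h t) (y t) (δy t))
        + (δh t (y t + δy t) - δh t (y t)) := by
    simp only [evalOp, evalOpDeriv, Pi.add_apply]
    abel
  calc ‖evalOp (y + δy) (h + δh) t - evalOp y h t - evalOpDeriv y h δh δy t‖ₑ
      ≤ ‖h t (y t + δy t) - h t (y t) - fderiv ℝ (h t) (y t) (δy t)‖ₑ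
        + ‖δh t (y t + δy t) - δh t (y t)‖ₑ := hsplit ▸ enorm_add_le _ _
    _ ≤ gSeminormE t0 tf 2 h * ‖δy t‖ₑ * ‖δy t‖ₑ + gSeminormE t0 tf 1 δh * ‖δy t‖ₑ := by
      gcongr
      · exact enorm_taylor_remainder_le (hht.differentiable two_ne_zero)
          ((hht.fderiv_right le_rfl).differentiable one_ne_zero) hC _ _
      · simpa using enorm_sub_le_of_enorm_fderiv_le hδht hD (y t + δy t) (y t)
    _ ≤ _ := by gcongr

theorem eLinf_evalOpDeriv_sub_le {y' : ℝ → (Fin ny → ℝ)} {h' : ℝ → (Fin ny → ℝ) → (Fin m → ℝ)}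
    (hh : ∀ᵐ t ∂μI t0 tf, ContDiff ℝ 2 (h t)) (hh' : ∀ᵐ t ∂μI t0 tf, Differentiable ℝ (h' t))
    (hδh : ∀ᵐ t ∂μI t0 tf, Differentiable ℝ (δh t)) :
    eLinf t0 tf (fun t => evalOpDeriv y' h' δh δy t - evalOpDeriv y h δh δy t)
      ≤ gSeminormE t0 tf 1 (h' - h) * eLinf t0 tf δy
        + gSeminormE t0 tf 2 h * eLinf t0 tf (y' - y) * eLinf t0 tf δy
        + gSeminormE t0 tf 1 δh * eLinf t0 tf (y' - y) := by
  refine essSup_le_of_ae_le _ ?_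
  filter_upwards [hh, hh', hδh, ae_enorm_fderiv_le_gSeminormE_one (h' - h),
    ae_enorm_fderiv_fderiv_le_gSeminormE_two h, ae_enorm_fderiv_le_gSeminormE_one δh,
    ae_enorm_le_eLinf δy, ae_enorm_le_eLinf (y' - y)]
    with t hht hh't hδht hD hC hE hδyt hyt
  have hdiff : fderiv ℝ ((h' - h) t) (y' t) = fderiv ℝ (h' t) (y' t) - fderiv ℝ (h t) (y' t) :=
    fderiv_sub (hh't _) (hht.differentiable two_ne_zero _)
  have hsplit : evalOpDeriv y' h' δh δy t - evalOpDeriv y h δh δy t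
      = (fderiv ℝ ((h' - h) t) (y' t) + (fderiv ℝ (h t) (y' t) - fderiv ℝ (h t) (y t))) (δy t)
        + (δh t (y' t) - δh t (y t)) := by
    rw [hdiff]
    simp only [evalOpDeriv, add_apply, sub_apply]
    abel
  calc ‖evalOpDeriv y' h' δh δy t - evalOpDeriv y h δh δy t‖ₑ
      ≤ (‖fderiv ℝ ((h' - h) t) (y' t)‖ₑ + ‖fderiv ℝ (h t) (y' t) - fderiv ℝ (h t) (y t)‖ₑ)
          * ‖δy t‖ₑ + ‖δh t (y' t) - δh t (y t)‖ₑ := by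
        rw [hsplit]
        refine (enorm_add_le _ _).trans ?_
        gcongr
        refine (ContinuousLinearMap.le_opENorm _ _).trans ?_
        gcongr
        exact enorm_add_le (fderiv ℝ ((h' - h) t) (y' t)) _
    _ ≤ (gSeminormE t0 tf 1 (h' - h) + gSeminormE t0 tf 2 h * ‖(y' - y) t‖ₑ) * ‖δy t‖ₑ
        + gSeminormE t0 tf 1 δh * ‖(y' - y) t‖ₑ := by
      gcongr
      · exact hD _
      · exact enorm_sub_le_of_enorm_fderiv_le
          ((hht.fderiv_right le_rfl).differentiable one_ne_zero) hC _ _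
      · exact enorm_sub_le_of_enorm_fderiv_le hδht hE _ _
    _ ≤ _ := by
      rw [add_mul]
      gcongr

theorem eLinf_evalOp_remainder_le_mul (hh : MemG t0 tf 2 h) (hδh : MemG t0 tf 2 δh) :
    eLinf t0 tf (fun t => evalOp (y + δy) (h + δh) t - evalOp y h t - evalOpDeriv y h δh δy t)
      ≤ (gSeminormE t0 tf 2 h + 1) * (eLinf t0 tf δy + gNormE t0 tf 2 δh)
        * (eLinf t0 tf δy + gNormE t0 tf 2 δh) := by
  set S := eLinf t0 tf δy + gNormE t0 tf 2 δh
  calc _ ≤ gSeminormE t0 tf 2 h * eLinf t0 tf δy * eLinf t0 tf δy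
          + gSeminormE t0 tf 1 δh * eLinf t0 tf δy :=
        eLinf_evalOp_remainder_le hh.ae_contDiff (hδh.ae_differentiable two_ne_zero)
    _ ≤ gSeminormE t0 tf 2 h * S * S + S * S := by
        gcongr
        exacts [le_self_add, le_self_add, (gSeminormE_le_gNormE one_le_two δh).trans le_add_self,
          le_self_add]
    _ = (gSeminormE t0 tf 2 h + 1) * S * S := by ring

theorem eLinf_evalOpDeriv_sub_le_mul {y' : ℝ → (Fin ny → ℝ)}
    {h' : ℝ → (Fin ny → ℝ) → (Fin m → ℝ)} (hh : MemG t0 tf 2 h) (hh' : MemG t0 tf 2 h')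
    (hδh : MemG t0 tf 2 δh) :
    eLinf t0 tf (fun t => evalOpDeriv y' h' δh δy t - evalOpDeriv y h δh δy t)
      ≤ (gSeminormE t0 tf 2 h + 2) * (eLinf t0 tf (y' - y) + gNormE t0 tf 2 (h' - h))
        * (eLinf t0 tf δy + gNormE t0 tf 2 δh) := by
  set T := eLinf t0 tf (y' - y) + gNormE t0 tf 2 (h' - h)
  set S := eLinf t0 tf δy + gNormE t0 tf 2 δh
  calc _ ≤ gSeminormE t0 tf 1 (h' - h) * eLinf t0 tf δy
          + gSeminormE t0 tf 2 h * eLinf t0 tf (y' - y) * eLinf t0 tf δy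
          + gSeminormE t0 tf 1 δh * eLinf t0 tf (y' - y) :=
        eLinf_evalOpDeriv_sub_le hh.ae_contDiff (hh'.ae_differentiable two_ne_zero)
          (hδh.ae_differentiable two_ne_zero)
    _ ≤ T * S + gSeminormE t0 tf 2 h * T * S + S * T := by
        gcongr
        exacts [(gSeminormE_le_gNormE one_le_two _).trans le_add_self, le_self_add,
          le_self_add, le_self_add, (gSeminormE_le_gNormE one_le_two δh).trans le_add_self,
          le_self_add]
    _ = (gSeminormE t0 tf 2 h + 2) * T * S := by ring

end Nemytskii

theorem ENNReal.exists_pos_mul_le {K ε : ℝ≥0∞} (hK : K ≠ ⊤) (hε : ε ≠ 0) :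
    ∃ δ > 0, K * δ ≤ ε :=
  ⟨ε / K, ENNReal.div_pos hε hK, ENNReal.mul_div_le⟩

theorem eval_operator_continuously_frechet_differentiable_general
    {ny m : ℕ} (t0 tf : ℝ) :
    ∀ (y : ℝ → (Fin ny → ℝ)) (h : ℝ → (Fin ny → ℝ) → (Fin m → ℝ)),
      MemLinf t0 tf y → MemG t0 tf 2 h →
      -- Fréchet differentiability at (y, h) with derivative `evalOpDeriv y h`:
      (∀ ε : ℝ≥0∞, 0 < ε → ∃ δ : ℝ≥0∞, 0 < δ ∧
        ∀ δy δh, MemLinf t0 tf δy → MemG t0 tf 2 δh →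
          eLinf t0 tf δy + gNormE t0 tf 2 δh ≤ δ →
          eLinf t0 tf
              (fun t => evalOp (y + δy) (h + δh) t - evalOp y h t - evalOpDeriv y h δh δy t)
            ≤ ε * (eLinf t0 tf δy + gNormE t0 tf 2 δh)) ∧
      -- continuity of the Fréchet derivative in the operator norm:
      (∀ ε : ℝ≥0∞, 0 < ε → ∃ δ : ℝ≥0∞, 0 < δ ∧
        ∀ y' h', MemLinf t0 tf y' → MemG t0 tf 2 h' →
          eLinf t0 tf (y' - y) + gNormE t0 tf 2 (h' - h) ≤ δ →
          ∀ δy δh, MemLinf t0 tf δy → MemG t0 tf 2 δh →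
            eLinf t0 tf (fun t => evalOpDeriv y' h' δh δy t - evalOpDeriv y h δh δy t)
              ≤ ε * (eLinf t0 tf δy + gNormE t0 tf 2 δh)) := by
  intro y h _ hh
  have hC : gSeminormE t0 tf 2 h ≠ ⊤ := hh.gSeminormE_ne_top le_rfl
  refine ⟨fun ε hε => ?_, fun ε hε => ?_⟩
  · obtain ⟨δ, hδ, hKδ⟩ :=
      ENNReal.exists_pos_mul_le (K := gSeminormE t0 tf 2 h + 1) (by finiteness) hε.ne'
    refine ⟨δ, hδ, fun δy δh _ hδh hS => (eLinf_evalOp_remainder_le_mul hh hδh).trans ?_⟩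
    gcongr
    grw [hS, hKδ]
  · obtain ⟨δ, hδ, hKδ⟩ :=
      ENNReal.exists_pos_mul_le (K := gSeminormE t0 tf 2 h + 2) (by finiteness) hε.ne'
    refine ⟨δ, hδ, fun y' h' _ hh' hT δy δh _ hδh =>
      (eLinf_evalOpDeriv_sub_le_mul hh hh' hδh).trans ?_⟩
    gcongr
    grw [hT, hKδ]

/-- evaluation operator, the special case `φ(t,y,g) = g` of Theorem 2.9.
The operator `Φ : L^∞(I)^{n_y} × (G²(I))^m → L^∞(I)^m`, `Φ(y,h) = h(·, y(·))`, is Fréchet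
differentiable at every point with derivative `(δy, δh) ↦ h_y(·, y(·))δy(·) + δh(·, y(·))`
(first conjunct), and its derivative depends continuously on the point `(y, h)` in the
operator norm (second conjunct). -/
theorem eval_operator_continuously_frechet_differentiable
    {ny m : ℕ} (t0 tf : ℝ) (ht : t0 < tf) :
    ∀ (y : ℝ → (Fin ny → ℝ)) (h : ℝ → (Fin ny → ℝ) → (Fin m → ℝ)),
      MemLinf t0 tf y → MemG t0 tf 2 h →
      -- Fréchet differentiability at (y, h) with derivative `evalOpDeriv y h`:
      (∀ ε : ℝ≥0∞, 0 < ε → ∃ δ : ℝ≥0∞, 0 < δ ∧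
        ∀ δy δh, MemLinf t0 tf δy → MemG t0 tf 2 δh →
          eLinf t0 tf δy + gNormE t0 tf 2 δh ≤ δ →
          eLinf t0 tf
              (fun t => evalOp (y + δy) (h + δh) t - evalOp y h t - evalOpDeriv y h δh δy t)
            ≤ ε * (eLinf t0 tf δy + gNormE t0 tf 2 δh)) ∧
      -- continuity of the Fréchet derivative in the operator norm:
      (∀ ε : ℝ≥0∞, 0 < ε → ∃ δ : ℝ≥0∞, 0 < δ ∧
        ∀ y' h', MemLinf t0 tf y' → MemG t0 tf 2 h' →
          eLinf t0 tf (y' - y) + gNormE t0 tf 2 (h' - h) ≤ δ →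
          ∀ δy δh, MemLinf t0 tf δy → MemG t0 tf 2 δh →
            eLinf t0 tf (fun t => evalOpDeriv y' h' δh δy t - evalOpDeriv y h δh δy t)
              ≤ ε * (eLinf t0 tf δy + gNormE t0 tf 2 δh)) :=
  eval_operator_continuously_frechet_differentiable_general t0 tf

end
end

section
/- In the setting of the LQOCP on I = (t₀, t_f) with essentially bounded coefficient matrices A, B, C, essentially bounded Hamiltonian Hessian blocks H_xx, H_ux, H_uu, H_up, essentially bounded data c_u, r, and r₀ ∈ ℝ^{n_x}, suppose (δx, δu, δp, δλ) ∈ W^{1,2}(I)^{n_x} × L²(I)^{n_u} × ℝ^{n_p} × W^{1,2}(I)^{n_x} satisfies a.e. on I the stationarity condition H_ux(t)δx(t) + H_uu(t)δu(t) + H_up(t)δp + B(t)ᵀδλ(t) = −c_u(t), the state equation δx'(t) = A(t)δx(t) + B(t)δu(t) + C(t)δp + r(t) with δx(t₀) = r₀, and the adjoint equation −δλ'(t) = H_xx(t)δx(t) + H_xu(t)δu(t) + H_xp(t)δp + A(t)ᵀδλ(t) + c_x(t) with c_x, H_xu, H_xp essentially bounded and terminal condition δλ(t_f) given by a linear expression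 in δx(t_f) and δp. If in addition H_uu(t) is invertible for almost all t ∈ I with ‖H_uu(t)^{-1}‖ ≤ M for some M > 0, then δu ∈ L^∞(I)^{n_u}, δx ∈ W^{1,∞}(I)^{n_x}, and δλ ∈ W^{1,∞}(I)^{n_x}. -/
open MeasureTheory Set
open scoped NNReal ENNReal

noncomputable section

/-- Vectors in `ℝⁿ`. -/
abbrev Vec (n : ℕ) := Fin n → ℝ

/-- `Aᵀ v` for a continuous linear map `A : ℝⁿ → ℝᵐ`: `(Aᵀ v)ᵢ = Σⱼ vⱼ (A eᵢ)ⱼ`. -/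
def clmT {n m : ℕ} (A : Vec n →L[ℝ] Vec m) (v : Vec m) : Vec n :=
  fun i => ∑ j, v j * A (Pi.single i (1 : ℝ)) j

/-- Essential boundedness together with a.e.-measurability (membership in `L^∞(I)`),
for functions with values in any normed space. -/
def EssBdd {E : Type*} [NormedAddCommGroup E] (t0 tf : ℝ) (F : ℝ → E) : Prop :=
  AEStronglyMeasurable F (μI t0 tf) ∧ ∃ c : ℝ, ∀ᵐ t ∂(μI t0 tf), ‖F t‖ ≤ c

/-!
A function continuous on the compact interval `[t₀, t_f]` is essentially bounded, and so are the
coefficients; solving the stationarity condition for `δu` through the uniformly bounded inverse of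
`H_uu` therefore makes `δu` essentially bounded. Then the integrands of the state and adjoint
equations are essentially bounded, and a primitive of an `L^∞` function is Lipschitz with the
`L^∞` norm as constant.
-/

theorem norm_clmT_le {n m : ℕ} (A : Vec n →L[ℝ] Vec m) (v : Vec m) :
    ‖clmT A v‖ ≤ m * ‖A‖ * ‖v‖ := by
  refine (pi_norm_le_iff_of_nonneg (by positivity)).2 fun i => ?_
  have hAe : ‖A (Pi.single i 1)‖ ≤ ‖A‖ := by
    simpa [Pi.norm_single] using A.le_opNorm (Pi.single i 1)
  calc ‖clmT A v i‖ ≤ ∑ j, ‖v j * A (Pi.single i 1) j‖ := norm_sum_le _ _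
    _ ≤ ∑ _j : Fin m, ‖A‖ * ‖v‖ := Finset.sum_le_sum fun j _ => by
        rw [norm_mul, mul_comm]
        exact mul_le_mul ((norm_le_pi_norm _ j).trans hAe) (norm_le_pi_norm v j)
          (norm_nonneg _) (norm_nonneg _)
    _ = m * ‖A‖ * ‖v‖ := by simp [mul_assoc]

theorem continuous_clmT {n m : ℕ} :
    Continuous fun p : (Vec n →L[ℝ] Vec m) × Vec m => clmT p.1 p.2 := by
  unfold clmT
  fun_prop

section EssentiallyBounded

variable {α E F : Type*} [MeasurableSpace α] {μ : Measure α}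
  [NormedAddCommGroup E] [NormedSpace ℝ E] [NormedAddCommGroup F] [NormedSpace ℝ F]

theorem memLp_top_clm_apply {L : α → E →L[ℝ] F} {f : α → E} (hL : MemLp L ∞ μ)
    (hf : MemLp f ∞ μ) : MemLp (fun t => L t (f t)) ∞ μ :=
  MemLp.of_bilin (fun L x => L x) 1 hL hf
    (isBoundedBilinearMap_apply.continuous.comp_aestronglyMeasurable (hL.1.prodMk hf.1))
    (.of_forall fun t => by simpa using (L t).le_opNNNorm (f t))

theorem memLp_top_clmT {n m : ℕ} {L : α → Vec n →L[ℝ] Vec m} {f : α → Vec m}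
    (hL : MemLp L ∞ μ) (hf : MemLp f ∞ μ) : MemLp (fun t => clmT (L t) (f t)) ∞ μ :=
  MemLp.of_bilin clmT m hL hf (continuous_clmT.comp_aestronglyMeasurable (hL.1.prodMk hf.1))
    (.of_forall fun t => by
      simpa [← NNReal.coe_le_coe] using norm_clmT_le (L t) (f t))

end EssentiallyBounded

section Interval

variable {E : Type*} [NormedAddCommGroup E] {t0 tf : ℝ} {f g : ℝ → E}

instance isFiniteMeasure_μI : IsFiniteMeasure (μI t0 tf) :=
  isFiniteMeasure_restrict.2 measure_Ioo_lt_top.ne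

theorem μI_eq_restrict_Icc : μI t0 tf = volume.restrict (Icc t0 tf) :=
  Measure.restrict_congr_set Ioo_ae_eq_Icc

theorem EssBdd.memLp_top (hg : EssBdd t0 tf g) : MemLp g ∞ (μI t0 tf) :=
  let ⟨hm, c, hc⟩ := hg
  memLp_top_of_bound hm c hc

theorem memLp_top_μI_of_continuousOn (hf : ContinuousOn f (Icc t0 tf)) :
    MemLp f ∞ (μI t0 tf) :=
  let ⟨c, hc⟩ := isCompact_Icc.exists_bound_of_continuousOn hf
  memLp_top_of_bound ((hf.mono Ioo_subset_Icc_self).aestronglyMeasurable measurableSet_Ioo) c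
    ((ae_restrict_mem measurableSet_Ioo).mono fun t ht => hc t (Ioo_subset_Icc_self ht))

theorem intervalIntegrable_of_memLp_top_μI (hg : MemLp g ∞ (μI t0 tf)) {a b : ℝ}
    (ha : a ∈ Icc t0 tf) (hb : b ∈ Icc t0 tf) : IntervalIntegrable g volume a b := by
  have hint : IntegrableOn g (Icc t0 tf) := by
    rw [IntegrableOn, ← μI_eq_restrict_Icc]
    exact hg.integrable le_top
  exact intervalIntegrable_iff.2 (hint.mono_set (uIoc_subset_uIcc.trans (uIcc_subset_Icc ha hb)))

variable [NormedSpace ℝ E]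

theorem lipschitzOnWith_of_sub_eq_integral (hg : MemLp g ∞ (μI t0 tf))
    (hf : ∀ a ∈ Icc t0 tf, ∀ b ∈ Icc t0 tf, f b - f a = ∫ s in a..b, g s) :
    LipschitzOnWith (lpNorm g ∞ (μI t0 tf)).toNNReal f (Icc t0 tf) := by
  refine LipschitzOnWith.of_dist_le_mul fun b hb a ha => ?_
  have hbound : ∀ᵐ s ∂volume.restrict (uIoc a b), ‖g s‖ ≤ lpNorm g ∞ (μI t0 tf) := by
    refine ae_restrict_of_ae_restrict_of_subset (uIoc_subset_uIcc.trans (uIcc_subset_Icc ha hb)) ?_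
    rw [← μI_eq_restrict_Icc]
    exact ae_le_lpNorm_exponent_top hg
  calc dist (f b) (f a) = ‖∫ s in a..b, g s‖ := by rw [dist_eq_norm, hf a ha b hb]
    _ ≤ |∫ _ in a..b, lpNorm g ∞ (μI t0 tf)| :=
        intervalIntegral.norm_integral_le_abs_of_norm_le hbound intervalIntegrable_const
    _ = _ := by
        rw [intervalIntegral.integral_const, smul_eq_mul, abs_mul, abs_of_nonneg lpNorm_nonneg,
          Real.coe_toNNReal _ lpNorm_nonneg, Real.dist_eq, abs_sub_comm, mul_comm]

theorem lipschitzOnWith_const_add_integral_left {c : E} (hg : MemLp g ∞ (μI t0 tf))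
    (hf : ∀ t ∈ Icc t0 tf, f t = c + ∫ s in t0..t, g s) :
    LipschitzOnWith (lpNorm g ∞ (μI t0 tf)).toNNReal f (Icc t0 tf) := by
  refine lipschitzOnWith_of_sub_eq_integral hg fun a ha b hb => ?_
  have ht0 : t0 ∈ Icc t0 tf := ⟨le_rfl, ha.1.trans ha.2⟩
  rw [hf a ha, hf b hb, add_sub_add_left_eq_sub]
  exact intervalIntegral.integral_interval_sub_left
    (intervalIntegrable_of_memLp_top_μI hg ht0 hb) (intervalIntegrable_of_memLp_top_μI hg ht0 ha)

theorem lipschitzOnWith_const_add_integral_right {c : E} (hg : MemLp g ∞ (μI t0 tf))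
    (hf : ∀ t ∈ Icc t0 tf, f t = c + ∫ s in t..tf, g s) :
    LipschitzOnWith (lpNorm g ∞ (μI t0 tf)).toNNReal f (Icc t0 tf) := by
  rw [← lpNorm_neg]
  refine lipschitzOnWith_of_sub_eq_integral hg.neg fun a ha b hb => ?_
  have htf : tf ∈ Icc t0 tf := ⟨ha.1.trans ha.2, le_rfl⟩
  rw [hf a ha, hf b hb, add_sub_add_left_eq_sub,
    intervalIntegral.integral_interval_sub_interval_comm'
      (intervalIntegrable_of_memLp_top_μI hg hb htf)
      (intervalIntegrable_of_memLp_top_μI hg ha htf)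
      (intervalIntegrable_of_memLp_top_μI hg hb ha)]
  simp

end Interval

theorem lq_regularity_bootstrap_general
    {nx nu np : ℕ} (t0 tf : ℝ)
    (A : ℝ → (Vec nx →L[ℝ] Vec nx)) (B : ℝ → (Vec nu →L[ℝ] Vec nx))
    (C : ℝ → (Vec np →L[ℝ] Vec nx))
    (Hxx : ℝ → (Vec nx →L[ℝ] Vec nx)) (Hxu : ℝ → (Vec nu →L[ℝ] Vec nx))
    (Hxp : ℝ → (Vec np →L[ℝ] Vec nx))
    (Hux : ℝ → (Vec nx →L[ℝ] Vec nu)) (Huu : ℝ → (Vec nu →L[ℝ] Vec nu))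
    (Hup : ℝ → (Vec np →L[ℝ] Vec nu))
    (cx : ℝ → Vec nx) (cu : ℝ → Vec nu) (r : ℝ → Vec nx) (r0 : Vec nx)
    (T1 : Vec nx →L[ℝ] Vec nx) (T2 : Vec np →L[ℝ] Vec nx)
    (δx : ℝ → Vec nx) (δu : ℝ → Vec nu) (δp : Vec np) (dl : ℝ → Vec nx)
    -- essentially bounded coefficients and data:
    (hA : EssBdd t0 tf A) (hB : EssBdd t0 tf B) (hC : EssBdd t0 tf C)
    (hHxx : EssBdd t0 tf Hxx) (hHxu : EssBdd t0 tf Hxu) (hHxp : EssBdd t0 tf Hxp)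
    (hHux : EssBdd t0 tf Hux) (hHup : EssBdd t0 tf Hup)
    (hcx : EssBdd t0 tf cx) (hcu : EssBdd t0 tf cu) (hr : EssBdd t0 tf r)
    -- (δx, δu, δp, dl) ∈ W^{1,2} × L² × ℝ^{n_p} × W^{1,2}:
    (hδu_meas : AEStronglyMeasurable δu (μI t0 tf))
    (hδx_cont : ContinuousOn δx (Set.Icc t0 tf))
    (hdl_cont : ContinuousOn dl (Set.Icc t0 tf))
    -- the stationarity condition a.e. on I:
    (hstat : ∀ᵐ t ∂(μI t0 tf),
      Hux t (δx t) + Huu t (δu t) + Hup t δp + clmT (B t) (dl t) = -(cu t))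
    -- the state equation (integral form), δx(t₀) = r₀:
    (hstate : ∀ t ∈ Set.Icc t0 tf,
      δx t = r0 + ∫ s in t0..t, (A s (δx s) + B s (δu s) + C s δp + r s))
    -- the adjoint equation (integral form) with terminal value T1 δx(t_f) + T2 δp:
    (hadj : ∀ t ∈ Set.Icc t0 tf,
      dl t = T1 (δx tf) + T2 δp
        + ∫ s in t..tf,
            (Hxx s (δx s) + Hxu s (δu s) + Hxp s δp + clmT (A s) (dl s) + cx s))
    -- H_uu(t) invertible a.e. with uniformly bounded inverse:
    (hinv : ∃ M : ℝ, 0 < M ∧ ∃ Hinv : ℝ → (Vec nu →L[ℝ] Vec nu),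
      ∀ᵐ t ∂(μI t0 tf),
        (∀ v, Hinv t (Huu t v) = v ∧ Huu t (Hinv t v) = v) ∧ ‖Hinv t‖ ≤ M) :
    -- δu ∈ L^∞(I)^{n_u}, δx ∈ W^{1,∞}(I)^{n_x}, dl ∈ W^{1,∞}(I)^{n_x}:
    (∃ Cu : ℝ, ∀ᵐ t ∂(μI t0 tf), ‖δu t‖ ≤ Cu) ∧
    (∃ Kx : ℝ≥0, LipschitzOnWith Kx δx (Set.Icc t0 tf)) ∧
    (∃ Kl : ℝ≥0, LipschitzOnWith Kl dl (Set.Icc t0 tf)) := by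
  obtain ⟨M, -, Hinv, hHinv⟩ := hinv
  have hx := memLp_top_μI_of_continuousOn hδx_cont
  have hl := memLp_top_μI_of_continuousOn hdl_cont
  have hp : MemLp (fun _ => δp) ∞ (μI t0 tf) := memLp_top_const δp
  have hu : MemLp δu ∞ (μI t0 tf) := by
    refine (((hcu.memLp_top.add (memLp_top_clm_apply hHux.memLp_top hx)).add
      (memLp_top_clm_apply hHup.memLp_top hp)).add
      (memLp_top_clmT hB.memLp_top hl)).of_le_mul hδu_meas (c := M) ?_
    filter_upwards [hstat, hHinv] with t hstat_t ⟨hleft_inv, hM⟩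
    have hsolve : Huu t (δu t) = -(cu t + Hux t (δx t) + Hup t δp + clmT (B t) (dl t)) := by
      linear_combination (norm := module) hstat_t
    calc ‖δu t‖ = ‖Hinv t (Huu t (δu t))‖ := by rw [(hleft_inv _).1]
      _ ≤ M * ‖Huu t (δu t)‖ := (Hinv t).le_of_opNorm_le hM _
      _ = _ := by rw [hsolve, norm_neg]; rfl
  refine ⟨⟨_, ae_le_lpNorm_exponent_top hu⟩,
    ⟨_, lipschitzOnWith_const_add_integral_left ?_ hstate⟩,
    ⟨_, lipschitzOnWith_const_add_integral_right ?_ hadj⟩⟩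
  · exact (((memLp_top_clm_apply hA.memLp_top hx).add
      (memLp_top_clm_apply hB.memLp_top hu)).add (memLp_top_clm_apply hC.memLp_top hp)).add
      hr.memLp_top
  · exact ((((memLp_top_clm_apply hHxx.memLp_top hx).add
      (memLp_top_clm_apply hHxu.memLp_top hu)).add (memLp_top_clm_apply hHxp.memLp_top hp)).add
      (memLp_top_clmT hA.memLp_top hl)).add hcx.memLp_top

/-- regularity bootstrap in the proof of Lemma 2.17.  If
`(δx, δu, δp, dl) ∈ W^{1,2} × L² × ℝ^{n_p} × W^{1,2}` satisfies the stationarity condition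
`H_ux δx + H_uu δu + H_up δp + Bᵀdl = −c_u` a.e., the state equation
`δx' = A δx + B δu + C δp + r`, `δx(t₀) = r₀`, and the adjoint equation
`−dl' = H_xx δx + H_xu δu + H_xp δp + Aᵀdl + c_x` with terminal value `dl(t_f)` a linear
expression in `δx(t_f)` and `δp` (all coefficients essentially bounded), and if `H_uu(t)`
is invertible a.e. with `‖H_uu(t)⁻¹‖ ≤ M`, then `δu ∈ L^∞(I)^{n_u}` and
`δx, dl ∈ W^{1,∞}(I)^{n_x}` (i.e. they are Lipschitz on `[t₀, t_f]`). -/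
theorem lq_regularity_bootstrap
    {nx nu np : ℕ} (t0 tf : ℝ) (ht : t0 < tf)
    (A : ℝ → (Vec nx →L[ℝ] Vec nx)) (B : ℝ → (Vec nu →L[ℝ] Vec nx))
    (C : ℝ → (Vec np →L[ℝ] Vec nx))
    (Hxx : ℝ → (Vec nx →L[ℝ] Vec nx)) (Hxu : ℝ → (Vec nu →L[ℝ] Vec nx))
    (Hxp : ℝ → (Vec np →L[ℝ] Vec nx))
    (Hux : ℝ → (Vec nx →L[ℝ] Vec nu)) (Huu : ℝ → (Vec nu →L[ℝ] Vec nu))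
    (Hup : ℝ → (Vec np →L[ℝ] Vec nu))
    (cx : ℝ → Vec nx) (cu : ℝ → Vec nu) (r : ℝ → Vec nx) (r0 : Vec nx)
    (T1 : Vec nx →L[ℝ] Vec nx) (T2 : Vec np →L[ℝ] Vec nx)
    (δx : ℝ → Vec nx) (δu : ℝ → Vec nu) (δp : Vec np) (dl : ℝ → Vec nx)
    -- essentially bounded coefficients and data:
    (hA : EssBdd t0 tf A) (hB : EssBdd t0 tf B) (hC : EssBdd t0 tf C)
    (hHxx : EssBdd t0 tf Hxx) (hHxu : EssBdd t0 tf Hxu) (hHxp : EssBdd t0 tf Hxp)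
    (hHux : EssBdd t0 tf Hux) (hHuu : EssBdd t0 tf Huu) (hHup : EssBdd t0 tf Hup)
    (hcx : EssBdd t0 tf cx) (hcu : EssBdd t0 tf cu) (hr : EssBdd t0 tf r)
    -- (δx, δu, δp, dl) ∈ W^{1,2} × L² × ℝ^{n_p} × W^{1,2}:
    (hδu_meas : AEStronglyMeasurable δu (μI t0 tf)) (hδu_L2 : MemLp δu 2 (μI t0 tf))
    (hδx_cont : ContinuousOn δx (Set.Icc t0 tf))
    (hdl_cont : ContinuousOn dl (Set.Icc t0 tf))
    -- the stationarity condition a.e. on I: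
    (hstat : ∀ᵐ t ∂(μI t0 tf),
      Hux t (δx t) + Huu t (δu t) + Hup t δp + clmT (B t) (dl t) = -(cu t))
    -- the state equation (integral form), δx(t₀) = r₀:
    (hstate : ∀ t ∈ Set.Icc t0 tf,
      δx t = r0 + ∫ s in t0..t, (A s (δx s) + B s (δu s) + C s δp + r s))
    -- the adjoint equation (integral form) with terminal value T1 δx(t_f) + T2 δp:
    (hadj : ∀ t ∈ Set.Icc t0 tf,
      dl t = T1 (δx tf) + T2 δp
        + ∫ s in t..tf,
            (Hxx s (δx s) + Hxu s (δu s) + Hxp s δp + clmT (A s) (dl s) + cx s))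
    -- H_uu(t) invertible a.e. with uniformly bounded inverse:
    (hinv : ∃ M : ℝ, 0 < M ∧ ∃ Hinv : ℝ → (Vec nu →L[ℝ] Vec nu),
      ∀ᵐ t ∂(μI t0 tf),
        (∀ v, Hinv t (Huu t v) = v ∧ Huu t (Hinv t v) = v) ∧ ‖Hinv t‖ ≤ M) :
    -- δu ∈ L^∞(I)^{n_u}, δx ∈ W^{1,∞}(I)^{n_x}, dl ∈ W^{1,∞}(I)^{n_x}:
    (∃ Cu : ℝ, ∀ᵐ t ∂(μI t0 tf), ‖δu t‖ ≤ Cu) ∧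
    (∃ Kx : ℝ≥0, LipschitzOnWith Kx δx (Set.Icc t0 tf)) ∧
    (∃ Kl : ℝ≥0, LipschitzOnWith Kl dl (Set.Icc t0 tf)) :=
  lq_regularity_bootstrap_general t0 tf A B C Hxx Hxu Hxp Hux Huu Hup cx cu r r0 T1 T2 δx δu δp dl
    hA hB hC hHxx hHxu hHxp hHux hHup hcx hcu hr hδu_meas hδx_cont hdl_cont hstat hstate hadj hinv

end
end
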